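/- arXiv:1904.03878 — 3 statements merged into one kernel-verified Lean document; each statement's English description precedes it below -/
import Mathlib

section
/- Let α > n, x₀ ∈ ℝⁿ, R > 0, and f_ε(x) = (ε/(ε²+|x−x₀|²))^{(n+α)/2}. Then there exists C₀ > 0 independent of ε such that for all small ε > 0, ∫_{B_R(x₀)} ∫_{B_R(x₀)} |x−y|^{α−n+1} f_ε(x) f_ε(y) dx dy ≥ C₀ ε. -/
/-!
Two balls of radius `ε` centred at `x₀ ± v` with `‖v‖ = 3ε` lie in `B_{4ε}(x₀)` and are at
distance more than `4ε` from each other. On their product the kernel `‖x - y‖ ^ a` is at least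
`(4ε) ^ a` and each bubble factor is at least `(17ε) ^ (-s)`, while each ball has Haar measure
`ε ^ d` times that of the unit ball. Hence the double integral is at least a constant times
`ε ^ (a + 2d - 2s)`, which is `ε` for `a = α - n + 1`, `s = (n + α) / 2`, `d = n`.
-/

open MeasureTheory Metric Module

section FubiniLowerBound

variable {X Y : Type*} [MeasurableSpace X] [MeasurableSpace Y] {μ : Measure X} {ν : Measure Y}
  [SFinite μ] [SFinite ν]

theorem mul_measureReal_le_setIntegral_setIntegral {g : X → Y → ℝ} {s A : Set X} {t B : Set Y}
    {K : ℝ} (hg : IntegrableOn (Function.uncurry g) (s ×ˢ t) (μ.prod ν))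
    (hg_nonneg : ∀ x y, 0 ≤ g x y) (hA : MeasurableSet A) (hB : MeasurableSet B)
    (hAs : A ⊆ s) (hBt : B ⊆ t) (hμA : μ A ≠ ⊤) (hνB : ν B ≠ ⊤)
    (hK : ∀ x ∈ A, ∀ y ∈ B, K ≤ g x y) :
    K * (μ.real A * ν.real B) ≤ ∫ x in s, ∫ y in t, g x y ∂ν ∂μ := by
  rw [← measureReal_prod_prod]
  calc K * (μ.prod ν).real (A ×ˢ B)
      ≤ ∫ z in A ×ˢ B, Function.uncurry g z ∂μ.prod ν :=
        setIntegral_ge_of_const_le_real (hA.prod hB)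
          (by rw [Measure.prod_prod]; exact ENNReal.mul_ne_top hμA hνB)
          (fun z hz => hK z.1 hz.1 z.2 hz.2) (hg.mono_set (Set.prod_mono hAs hBt))
    _ ≤ ∫ z in s ×ˢ t, Function.uncurry g z ∂μ.prod ν :=
        setIntegral_mono_set hg (.of_forall fun z => hg_nonneg z.1 z.2)
          (Set.prod_mono hAs hBt).eventuallyLE
    _ = ∫ x in s, ∫ y in t, g x y ∂ν ∂μ := setIntegral_prod _ hg

end FubiniLowerBound

variable {E : Type*} [NormedAddCommGroup E]

noncomputable def bubble (x₀ : E) (ε s : ℝ) (x : E) : ℝ := (ε / (ε ^ 2 + ‖x - x₀‖ ^ 2)) ^ s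

theorem bubble_nonneg (x₀ : E) {ε : ℝ} (hε : 0 ≤ ε) (s : ℝ) (x : E) : 0 ≤ bubble x₀ ε s x :=
  Real.rpow_nonneg (by positivity) s

theorem continuous_bubble (x₀ : E) {ε s : ℝ} (hε : 0 < ε) (hs : 0 ≤ s) :
    Continuous (bubble x₀ ε s) :=
  (continuous_const.div (continuous_const.add ((continuous_id.sub continuous_const).norm.pow 2))
    fun x => (by positivity : 0 < ε ^ 2 + ‖x - x₀‖ ^ 2).ne').rpow_const fun _ => Or.inr hs

theorem rpow_neg_le_bubble (x₀ : E) {ε s : ℝ} (hε : 0 < ε) (hs : 0 ≤ s) {x : E}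
    (hx : ‖x - x₀‖ ≤ 4 * ε) : (17 * ε) ^ (-s) ≤ bubble x₀ ε s x := by
  rw [Real.rpow_neg (by positivity), ← Real.inv_rpow (by positivity)]
  refine Real.rpow_le_rpow (by positivity) ?_ hs
  have hx2 : ‖x - x₀‖ ^ 2 ≤ (4 * ε) ^ 2 := pow_le_pow_left₀ (norm_nonneg _) hx 2
  calc (17 * ε)⁻¹ = ε / (17 * ε ^ 2) := by field_simp
    _ ≤ ε / (ε ^ 2 + ‖x - x₀‖ ^ 2) :=
        div_le_div_of_nonneg_left hε.le (by positivity) (by nlinarith)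

theorem continuous_rpow_norm_sub_mul_bubble (x₀ : E) {a ε s : ℝ} (ha : 0 ≤ a) (hε : 0 < ε)
    (hs : 0 ≤ s) :
    Continuous (Function.uncurry fun x y : E => ‖x - y‖ ^ a * bubble x₀ ε s x * bubble x₀ ε s y) :=
  (((continuous_fst.sub continuous_snd).norm.rpow_const fun _ => Or.inr ha).mul
    ((continuous_bubble x₀ hε hs).comp continuous_fst)).mul
    ((continuous_bubble x₀ hε hs).comp continuous_snd)

variable [NormedSpace ℝ E]

theorem exists_balls_subset_ball_of_separated [Nontrivial E] (x₀ : E) {ε : ℝ} (hε : 0 < ε) :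
    ∃ p q : E, ball p ε ⊆ ball x₀ (4 * ε) ∧ ball q ε ⊆ ball x₀ (4 * ε) ∧
      ∀ x ∈ ball p ε, ∀ y ∈ ball q ε, 4 * ε < ‖x - y‖ := by
  obtain ⟨v, hv⟩ := exists_norm_eq E (by positivity : 0 ≤ 3 * ε)
  have hpq : dist (x₀ + v) (x₀ - v) = 6 * ε := by
    rw [dist_eq_norm, add_sub_sub_cancel, ← two_smul ℝ, norm_smul, hv]; norm_num; ring
  refine ⟨x₀ + v, x₀ - v, ball_subset_ball' ?_, ball_subset_ball' ?_, fun x hx y hy => ?_⟩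
  · rw [dist_self_add_left, hv]; linarith
  · rw [dist_self_sub_left, hv]; linarith
  · rw [mem_ball'] at hx
    rw [mem_ball] at hy
    linarith [dist_triangle4 (x₀ + v) x y (x₀ - v), dist_eq_norm x y]

variable [MeasurableSpace E] [BorelSpace E] [FiniteDimensional ℝ E] (μ : Measure E)
  [μ.IsAddHaarMeasure]

theorem measureReal_ball_eq (x : E) {r : ℝ} (hr : 0 < r) :
    μ.real (ball x r) = r ^ finrank ℝ E * μ.real (ball 0 1) := by
  rw [measureReal_def, Measure.addHaar_ball_of_pos μ x hr, ENNReal.toReal_mul,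
    ENNReal.toReal_ofReal (by positivity), measureReal_def]

theorem le_setIntegral_setIntegral_rpow_norm_sub_mul_bubble [Nontrivial E] (x₀ : E)
    {a s ε R : ℝ} (ha : 0 ≤ a) (hs : 0 ≤ s) (hε : 0 < ε) (hεR : 4 * ε ≤ R) :
    4 ^ a * 17 ^ (-2 * s) * μ.real (ball (0 : E) 1) ^ 2 * ε ^ (a + 2 * finrank ℝ E - 2 * s) ≤
      ∫ x in ball x₀ R, ∫ y in ball x₀ R,
        ‖x - y‖ ^ a * bubble x₀ ε s x * bubble x₀ ε s y ∂μ ∂μ := by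
  obtain ⟨p, q, hp, hq, hsep⟩ := exists_balls_subset_ball_of_separated x₀ hε
  have hR : ball x₀ (4 * ε) ⊆ ball x₀ R := ball_subset_ball hεR
  have hint : IntegrableOn
      (Function.uncurry fun x y : E => ‖x - y‖ ^ a * bubble x₀ ε s x * bubble x₀ ε s y)
      (ball x₀ R ×ˢ ball x₀ R) (μ.prod μ) :=
    ((continuous_rpow_norm_sub_mul_bubble x₀ ha hε hs).continuousOn.integrableOn_compact
      ((isCompact_closedBall x₀ R).prod (isCompact_closedBall x₀ R))).mono_set
      (Set.prod_mono ball_subset_closedBall ball_subset_closedBall)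
  refine le_of_eq_of_le ?_ <| mul_measureReal_le_setIntegral_setIntegral
    (K := (4 * ε) ^ a * (17 * ε) ^ (-s) * (17 * ε) ^ (-s)) hint
    (fun x y => mul_nonneg (mul_nonneg (by positivity) (bubble_nonneg x₀ hε.le s x))
      (bubble_nonneg x₀ hε.le s y)) measurableSet_ball measurableSet_ball (hp.trans hR)
    (hq.trans hR) measure_ball_lt_top.ne measure_ball_lt_top.ne fun x hx y hy => ?_
  · rw [measureReal_ball_eq μ p hε, measureReal_ball_eq μ q hε, Real.mul_rpow (by norm_num) hε.le,
      Real.mul_rpow (by norm_num) hε.le, ← Real.rpow_natCast ε,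
      show a + 2 * (finrank ℝ E : ℝ) - 2 * s = a + -s + -s + finrank ℝ E + finrank ℝ E by ring,
      show -2 * s = -s + -s by ring, Real.rpow_add (by norm_num), Real.rpow_add hε,
      Real.rpow_add hε, Real.rpow_add hε, Real.rpow_add hε]
    ring
  · have hx₀ : ‖x - x₀‖ ≤ 4 * ε := (mem_ball_iff_norm.1 (hp hx)).le
    have hy₀ : ‖y - x₀‖ ≤ 4 * ε := (mem_ball_iff_norm.1 (hq hy)).le
    have := bubble_nonneg x₀ hε.le s x
    gcongr
    · exact (hsep x hx y hy).le
    · exact rpow_neg_le_bubble x₀ hε hs hx₀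
    · exact rpow_neg_le_bubble x₀ hε hs hy₀

/-- Lower bound: for small `ε`, the double integral of `|x−y|^{α−n+1} f_ε(x) f_ε(y)` over
`B_R(x₀) × B_R(x₀)` is at least `C₀ ε`. -/
theorem stmt_9 (n : ℕ) (hn : 0 < n) (α : ℝ) (hα : (n : ℝ) < α)
    (x₀ : EuclideanSpace ℝ (Fin n)) (R : ℝ) (hR : 0 < R) :
    ∃ C₀ > (0 : ℝ), ∃ ε₀ > (0 : ℝ), ∀ ε : ℝ, 0 < ε → ε < ε₀ →
      C₀ * ε ≤ ∫ x in Metric.ball x₀ R, ∫ y in Metric.ball x₀ R,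
        ‖x - y‖ ^ (α - (n : ℝ) + 1) *
          ((ε / (ε ^ 2 + ‖x - x₀‖ ^ 2)) ^ (((n : ℝ) + α) / 2)) *
          ((ε / (ε ^ 2 + ‖y - x₀‖ ^ 2)) ^ (((n : ℝ) + α) / 2)) := by
  have : Nontrivial (EuclideanSpace ℝ (Fin n)) :=
    Module.nontrivial_of_finrank_pos (R := ℝ) (by rwa [finrank_euclideanSpace_fin])
  have hvol : 0 < volume.real (ball (0 : EuclideanSpace ℝ (Fin n)) 1) :=
    ENNReal.toReal_pos (measure_ball_pos volume 0 one_pos).ne' measure_ball_lt_top.ne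
  refine ⟨4 ^ (α - n + 1) * 17 ^ (-2 * ((n + α) / 2)) *
      volume.real (ball (0 : EuclideanSpace ℝ (Fin n)) 1) ^ 2, by positivity, R / 4, by positivity,
    fun ε hε hεR => ?_⟩
  have hn₀ : (0 : ℝ) ≤ n := n.cast_nonneg
  have h := le_setIntegral_setIntegral_rpow_norm_sub_mul_bubble volume x₀
    (a := α - n + 1) (s := (n + α) / 2) (R := R) (by linarith) (by linarith) hε (by linarith)
  rwa [finrank_euclideanSpace_fin, show α - n + 1 + 2 * n - 2 * ((n + α) / 2) = 1 by ring,
    Real.rpow_one] at h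
end

section
/- Let B₁ ⊂ ℝⁿ be the open unit ball, α > n, and p ∈ (2n/(n−α), 0). Let u ∈ C¹(closure B₁) be a positive solution of u(x) = ∫_{B₁} |x−y|^{α−n} u^{p−1}(y) dy. For λ ∈ (−1, 0), write x^λ = (2λ−x₁, x₂, …, x_n), Σ_λ = {x ∈ B₁ : x₁ < λ}, and u_λ(x) = u(x^λ). Then for every x ∈ Σ_λ, u(x) − u_λ(x) ≥ ∫_{Σ_λ} [ |x−y|^{α−n} − |x^λ−y|^{α−n} ] (u^{p−1}(y) − u_λ^{p−1}(y)) dy. -/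
/-!
Let `σ` be the reflection in `{x₁ = λ}`, so that
`u x - u (σ x) = ∫_{B₁} (|x - y|^{α-n} - |σ x - y|^{α-n}) u^{p-1}(y) dy`.
Since `σ` is a volume-preserving involutive isometry with `σ Σ_λ ⊆ B₁ \ Σ_λ`, the part of this
integral over `Σ_λ ∪ σ Σ_λ` is exactly the right-hand side. On the rest of `B₁` we have
`y₁ ≥ λ > x₁`, so `σ x` is closer to `y` than `x` is, and the kernel difference is nonnegative
because `α > n`.
-/

open MeasureTheory

/-- The reflection of `x` about the hyperplane `{x₁ = l}`. -/
noncomputable def reflPt (n : ℕ) (hn : 0 < n) (l : ℝ) (x : EuclideanSpace ℝ (Fin n)) :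
    EuclideanSpace ℝ (Fin n) :=
  x - (2 * (x ⟨0, hn⟩ - l)) • EuclideanSpace.single (⟨0, hn⟩ : Fin n) (1 : ℝ)

open Metric Set
open scoped RealInnerProductSpace

theorem IsometryEquiv.measurePreserving_volume {V : Type*} [NormedAddCommGroup V]
    [InnerProductSpace ℝ V] [FiniteDimensional ℝ V] [MeasurableSpace V] [BorelSpace V]
    (f : V ≃ᵢ V) : MeasurePreserving f volume volume := by
  simpa only [InnerProductSpace.euclideanHausdorffMeasure_eq_volume] using
    f.measurePreserving_euclideanHausdorffMeasure (Module.finrank ℝ V)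

/-- The reflection across `{x | ⟪e, x⟫ = l}`, provided `‖e‖ = 1`. -/
noncomputable def hyperplaneReflection {E : Type*} [NormedAddCommGroup E] [InnerProductSpace ℝ E]
    (e : E) (l : ℝ) (x : E) : E :=
  x - (2 * (⟪e, x⟫ - l)) • e

section HyperplaneReflection

variable {E : Type*} [NormedAddCommGroup E] [InnerProductSpace ℝ E] {e : E}

theorem inner_hyperplaneReflection (he : ‖e‖ = 1) (l : ℝ) (x : E) :
    ⟪e, hyperplaneReflection e l x⟫ = 2 * l - ⟪e, x⟫ := by
  simp only [hyperplaneReflection, inner_sub_right, inner_smul_right, real_inner_self_eq_norm_sq,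
    he]
  ring

theorem hyperplaneReflection_involutive (he : ‖e‖ = 1) (l : ℝ) :
    Function.Involutive (hyperplaneReflection e l) := by
  intro x
  rw [hyperplaneReflection, inner_hyperplaneReflection he, hyperplaneReflection]
  module

theorem norm_hyperplaneReflection_sub_sq (he : ‖e‖ = 1) (l : ℝ) (x y : E) :
    ‖hyperplaneReflection e l x - y‖ ^ 2 =
      ‖x - y‖ ^ 2 + 4 * (⟪e, x⟫ - l) * (⟪e, y⟫ - l) := by
  rw [hyperplaneReflection, sub_right_comm, norm_sub_sq_real, norm_smul, inner_smul_right,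
    inner_sub_left, real_inner_comm e x, real_inner_comm e y, he, Real.norm_eq_abs, mul_one,
    sq_abs]
  ring

theorem norm_sub_hyperplaneReflection (he : ‖e‖ = 1) (l : ℝ) (x y : E) :
    ‖x - hyperplaneReflection e l y‖ = ‖hyperplaneReflection e l x - y‖ := by
  rw [norm_sub_rev, ← sq_eq_sq₀ (norm_nonneg _) (norm_nonneg _),
    norm_hyperplaneReflection_sub_sq he, norm_hyperplaneReflection_sub_sq he, norm_sub_rev]
  ring

theorem norm_hyperplaneReflection_sub_hyperplaneReflection (he : ‖e‖ = 1) (l : ℝ) (x y : E) :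
    ‖hyperplaneReflection e l x - hyperplaneReflection e l y‖ = ‖x - y‖ := by
  rw [← sq_eq_sq₀ (norm_nonneg _) (norm_nonneg _), norm_hyperplaneReflection_sub_sq he,
    norm_sub_hyperplaneReflection he, norm_hyperplaneReflection_sub_sq he,
    inner_hyperplaneReflection he]
  ring

theorem norm_hyperplaneReflection_sub_le (he : ‖e‖ = 1) {l : ℝ} {x y : E} (hx : ⟪e, x⟫ ≤ l)
    (hy : l ≤ ⟪e, y⟫) : ‖hyperplaneReflection e l x - y‖ ≤ ‖x - y‖ := by
  rw [← pow_le_pow_iff_left₀ (norm_nonneg _) (norm_nonneg _) two_ne_zero,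
    norm_hyperplaneReflection_sub_sq he]
  nlinarith

theorem hyperplaneReflection_mem_ball (he : ‖e‖ = 1) {l : ℝ} {c y : E} {r : ℝ}
    (hc : l ≤ ⟪e, c⟫) (hy : y ∈ ball c r) (hyl : ⟪e, y⟫ ≤ l) :
    hyperplaneReflection e l y ∈ ball c r := by
  rw [mem_ball, dist_eq_norm] at hy ⊢
  exact (norm_hyperplaneReflection_sub_le he hyl hc).trans_lt hy

noncomputable def hyperplaneReflectionIsometryEquiv (he : ‖e‖ = 1) (l : ℝ) : E ≃ᵢ E where
  toEquiv := (hyperplaneReflection_involutive he l).toPerm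
  isometry_toFun := Isometry.of_dist_eq fun x y => by
    rw [dist_eq_norm, dist_eq_norm]
    exact norm_hyperplaneReflection_sub_hyperplaneReflection he l x y

variable [MeasurableSpace E] [BorelSpace E]

theorem measurableEmbedding_hyperplaneReflection (he : ‖e‖ = 1) (l : ℝ) :
    MeasurableEmbedding (hyperplaneReflection e l) :=
  (hyperplaneReflectionIsometryEquiv he l).toHomeomorph.measurableEmbedding

theorem measurePreserving_hyperplaneReflection [FiniteDimensional ℝ E] (he : ‖e‖ = 1) (l : ℝ) :
    MeasurePreserving (hyperplaneReflection e l) volume volume :=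
  (hyperplaneReflectionIsometryEquiv he l).measurePreserving_volume

end HyperplaneReflection

theorem setIntegral_add_comp_le {α : Type*} [MeasurableSpace α] {μ : Measure α} {σ : α → α}
    (hσ : MeasurePreserving σ μ μ) (hσe : MeasurableEmbedding σ) {s t : Set α} {g : α → ℝ}
    (hs : MeasurableSet s) (ht : MeasurableSet t) (hst : s ⊆ t) (hσst : σ '' s ⊆ t)
    (hdisj : Disjoint s (σ '' s)) (hg : IntegrableOn g t μ)
    (hg0 : ∀ y ∈ t \ (s ∪ σ '' s), 0 ≤ g y) :
    ∫ y in s, (g y + g (σ y)) ∂μ ≤ ∫ y in t, g y ∂μ := by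
  have hσs : MeasurableSet (σ '' s) := hσe.measurableSet_image.2 hs
  have hgσ : IntegrableOn (fun y => g (σ y)) s μ :=
    (hσ.integrableOn_image hσe).1 (hg.mono_set hσst)
  have hfold : ∫ y in s, (g y + g (σ y)) ∂μ = ∫ y in s ∪ σ '' s, g y ∂μ := by
    rw [integral_add (hg.mono_set hst) hgσ, setIntegral_union hdisj hσs (hg.mono_set hst)
      (hg.mono_set hσst), hσ.setIntegral_image_emb hσe]
  have hrest : 0 ≤ ∫ y in t \ (s ∪ σ '' s), g y ∂μ :=
    setIntegral_nonneg (ht.diff (hs.union hσs)) hg0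
  rw [hfold]
  rw [setIntegral_sdiff (hs.union hσs) hg (union_subset hst hσst)] at hrest
  linarith

theorem integral_sub_integral_hyperplaneReflection_ge {E : Type*} [NormedAddCommGroup E]
    [InnerProductSpace ℝ E] [FiniteDimensional ℝ E] [MeasurableSpace E] [BorelSpace E] {e : E}
    {l : ℝ} (he : ‖e‖ = 1) {c : E} {r : ℝ}
    (hc : l ≤ ⟪e, c⟫) {K : ℝ → ℝ} (hK : Continuous K) (hK_mono : MonotoneOn K (Ici 0))
    {w : E → ℝ} (hw : ContinuousOn w (closure (ball c r))) (hw0 : ∀ y ∈ ball c r, 0 ≤ w y)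
    {x : E} (hx : ⟪e, x⟫ ≤ l) :
    (∫ y in ball c r, K ‖x - y‖ * w y) -
        ∫ y in ball c r, K ‖hyperplaneReflection e l x - y‖ * w y ≥
      ∫ y in {y | y ∈ ball c r ∧ ⟪e, y⟫ < l},
        (K ‖x - y‖ - K ‖hyperplaneReflection e l x - y‖) *
          (w y - w (hyperplaneReflection e l y)) := by
  set σ := hyperplaneReflection e l
  set S := {y | y ∈ ball c r ∧ ⟪e, y⟫ < l}
  set g := fun y => (K ‖x - y‖ - K ‖σ x - y‖) * w y
  have hint (z : E) : IntegrableOn (fun y => K ‖z - y‖ * w y) (ball c r) :=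
    (((hK.comp (continuous_const.sub continuous_id).norm).continuousOn.mul hw).integrableOn_compact
      isBounded_ball.isCompact_closure).mono_set subset_closure
  have hg : IntegrableOn g (ball c r) := by
    simpa only [g, sub_mul, Pi.sub_def] using (hint x).sub (hint (σ x))
  have hS : MeasurableSet S :=
    measurableSet_ball.inter
      (measurableSet_lt (by fun_prop : Measurable fun y : E => ⟪e, y⟫) measurable_const)
  have hσS : σ '' S ⊆ ball c r := by
    rintro _ ⟨y, hy, rfl⟩
    exact hyperplaneReflection_mem_ball he hc hy.1 hy.2.le
  have hdisj : Disjoint S (σ '' S) := by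
    rw [disjoint_right]
    rintro _ ⟨y, hy, rfl⟩ hσy
    linarith [hy.2, hσy.2, inner_hyperplaneReflection he l y]
  have hg0 : ∀ y ∈ ball c r \ (S ∪ σ '' S), 0 ≤ g y := by
    rintro y ⟨hyB, hy⟩
    have hly : l ≤ ⟪e, y⟫ := not_lt.1 fun h => hy (Or.inl ⟨hyB, h⟩)
    exact mul_nonneg (sub_nonneg.2 (hK_mono (norm_nonneg _) (norm_nonneg _)
      (norm_hyperplaneReflection_sub_le he hx hly))) (hw0 y hyB)
  have hfold (y : E) : g y + g (σ y) = (K ‖x - y‖ - K ‖σ x - y‖) * (w y - w (σ y)) := by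
    simp only [g]
    rw [norm_hyperplaneReflection_sub_hyperplaneReflection he, norm_sub_hyperplaneReflection he]
    ring
  have hsplit : ∫ y in ball c r, g y =
      (∫ y in ball c r, K ‖x - y‖ * w y) - ∫ y in ball c r, K ‖σ x - y‖ * w y := by
    simp only [g, sub_mul]
    exact integral_sub (hint x) (hint (σ x))
  rw [ge_iff_le, ← hsplit]
  simpa only [hfold] using setIntegral_add_comp_le (σ := σ)
    (measurePreserving_hyperplaneReflection he l) (measurableEmbedding_hyperplaneReflection he l)
    hS measurableSet_ball (fun y hy => hy.1) hσS hdisj hg hg0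

theorem stmt_11_general (n : ℕ) (hn : 0 < n) (α p l : ℝ) (hα : (n : ℝ) < α)
    (hl2 : l < 0)
    (u : EuclideanSpace ℝ (Fin n) → ℝ)
    (hu : ContDiffOn ℝ 1 u (closure (Metric.ball (0 : EuclideanSpace ℝ (Fin n)) 1)))
    (hupos : ∀ x ∈ closure (Metric.ball (0 : EuclideanSpace ℝ (Fin n)) 1), 0 < u x)
    (heq : ∀ x ∈ closure (Metric.ball (0 : EuclideanSpace ℝ (Fin n)) 1),
      u x = ∫ y in Metric.ball (0 : EuclideanSpace ℝ (Fin n)) 1,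
        ‖x - y‖ ^ (α - (n : ℝ)) * u y ^ (p - 1)) :
    ∀ x ∈ {x : EuclideanSpace ℝ (Fin n) | x ∈ Metric.ball (0 : EuclideanSpace ℝ (Fin n)) 1 ∧
        x ⟨0, hn⟩ < l},
      u x - u (reflPt n hn l x) ≥
        ∫ y in {y : EuclideanSpace ℝ (Fin n) | y ∈ Metric.ball (0 : EuclideanSpace ℝ (Fin n)) 1 ∧
            y ⟨0, hn⟩ < l},
          (‖x - y‖ ^ (α - (n : ℝ)) - ‖reflPt n hn l x - y‖ ^ (α - (n : ℝ))) *
            (u y ^ (p - 1) - u (reflPt n hn l y) ^ (p - 1)) := by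
  set e := EuclideanSpace.single (⟨0, hn⟩ : Fin n) (1 : ℝ)
  have he : ‖e‖ = 1 := by simp [e]
  have hcoord (y : EuclideanSpace ℝ (Fin n)) : y ⟨0, hn⟩ = ⟪e, y⟫ := by
    simp [e, EuclideanSpace.inner_single_left]
  have hrefl : reflPt n hn l = hyperplaneReflection e l := by
    funext y
    rw [reflPt, hyperplaneReflection, hcoord]
  have hl : l ≤ ⟪e, 0⟫ := by simpa using hl2.le
  have hβ : 0 ≤ α - n := by linarith
  rintro x ⟨hxB, hxl⟩
  rw [hcoord] at hxl
  have hσx := hyperplaneReflection_mem_ball he hl hxB hxl.le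
  rw [hrefl, heq x (subset_closure hxB), heq _ (subset_closure hσx)]
  simp only [hcoord]
  exact integral_sub_integral_hyperplaneReflection_ge he hl (Real.continuous_rpow_const hβ)
    (Real.monotoneOn_rpow_Ici_of_exponent_nonneg hβ)
    (hu.continuousOn.rpow_const fun y hy => Or.inl (hupos y hy).ne')
    (fun y hy => (Real.rpow_pos_of_pos (hupos y (subset_closure hy)) _).le) hxl.le

/-- Moving-plane comparison inequality for positive solutions of the negative-power
integral equation on the unit ball. -/
theorem stmt_11 (n : ℕ) (hn : 0 < n) (α p l : ℝ) (hα : (n : ℝ) < α)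
    (hp1 : 2 * (n : ℝ) / ((n : ℝ) - α) < p) (hp2 : p < 0)
    (hl1 : -1 < l) (hl2 : l < 0)
    (u : EuclideanSpace ℝ (Fin n) → ℝ)
    (hu : ContDiffOn ℝ 1 u (closure (Metric.ball (0 : EuclideanSpace ℝ (Fin n)) 1)))
    (hupos : ∀ x ∈ closure (Metric.ball (0 : EuclideanSpace ℝ (Fin n)) 1), 0 < u x)
    (heq : ∀ x ∈ closure (Metric.ball (0 : EuclideanSpace ℝ (Fin n)) 1),
      u x = ∫ y in Metric.ball (0 : EuclideanSpace ℝ (Fin n)) 1,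
        ‖x - y‖ ^ (α - (n : ℝ)) * u y ^ (p - 1)) :
    ∀ x ∈ {x : EuclideanSpace ℝ (Fin n) | x ∈ Metric.ball (0 : EuclideanSpace ℝ (Fin n)) 1 ∧
        x ⟨0, hn⟩ < l},
      u x - u (reflPt n hn l x) ≥
        ∫ y in {y : EuclideanSpace ℝ (Fin n) | y ∈ Metric.ball (0 : EuclideanSpace ℝ (Fin n)) 1 ∧
            y ⟨0, hn⟩ < l},
          (‖x - y‖ ^ (α - (n : ℝ)) - ‖reflPt n hn l x - y‖ ^ (α - (n : ℝ))) *
            (u y ^ (p - 1) - u (reflPt n hn l y) ^ (p - 1)) :=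
  stmt_11_general n hn α p l hα hl2 u hu hupos heq
end

section
/- Let α > n, Ω_μ ⊆ ℝⁿ, p < 0, and h : Ω_μ → ℝ measurable with h ≥ 1 and A := ∫_{Ω_μ} h^{p−1}(y)(1 + |y|^{α−n}) dy < ∞, and a := ∫_{Ω_μ} h^{p−1}(y) dy > 0. Suppose Q h(z) = ∫_{Ω_μ} |z−y|^{α−n} h^{p−1}(y)(1 + λμ|z−y|) dy with Q > 0 and λμ ≤ 0, and assume 1 + λμ|z−y| ∈ [1−c, 1] with 0 < c < 1 on the support. Then (1−c)a/Q ≤ liminf_{|z|→∞} h(z)/|z|^{α−n} ≤ limsup_{|z|→∞} h(z)/|z|^{α−n} ≤ a/Q. In particular there exist C₁, C₂ > 0 with C₁(1+|z|^{α−n}) ≤ h(z) ≤ C₂(1+|z|^{α−n}) for all z. -/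
open MeasureTheory Filter

open Bornology Topology


lemma aux_ae_restrict_of_forall {X : Type*} [MeasurableSpace X] {μ : Measure X}
    {s : Set X} {P : X → Prop} (hP : MeasurableSet {x | P x})
    (h : ∀ x ∈ s, P x) : ∀ᵐ x ∂μ.restrict s, P x := by
  rw [ae_iff]
  have h1 : (μ.restrict s) {x | ¬ P x} = μ ({x | ¬ P x} ∩ s) :=
    Measure.restrict_apply hP.compl
  have h2 : {x | ¬ P x} ∩ s = ∅ := by
    ext x
    simp only [Set.mem_inter_iff, Set.mem_setOf_eq, Set.mem_empty_iff_false, iff_false, not_and]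
    exact fun hx hs => hx (h x hs)
  rw [h1, h2, measure_empty]

lemma aux_ae_restrict_fun {X : Type*} [MeasurableSpace X] {μ : Measure X}
    {s : Set X} {f : X → ℝ} (hf : AEStronglyMeasurable f (μ.restrict s))
    {P : ℝ → Prop} (hP : MeasurableSet {t | P t})
    (h : ∀ x ∈ s, P (f x)) : ∀ᵐ x ∂μ.restrict s, P (f x) := by
  have hae := hf.ae_eq_mk
  have hFM : Measurable (hf.mk f) := hf.stronglyMeasurable_mk.measurable
  have key : ∀ᵐ x ∂μ.restrict s, P (hf.mk f x) := by
    rw [ae_iff]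
    have hE : MeasurableSet {x | ¬ P (hf.mk f x)} := (hFM hP).compl
    rw [Measure.restrict_apply hE]
    have h0 : (μ.restrict s) {x | ¬ f x = hf.mk f x} = 0 := by
      have := hae
      rw [Filter.EventuallyEq, ae_iff] at this
      exact this
    have hsub : {x | ¬ P (hf.mk f x)} ∩ s ⊆ {x | ¬ f x = hf.mk f x} ∩ s := by
      rintro x ⟨hx, hxs⟩
      refine ⟨fun hEq => hx ?_, hxs⟩
      rw [← hEq]; exact h x hxs
    refine le_antisymm ?_ (zero_le)
    calc μ ({x | ¬ P (hf.mk f x)} ∩ s) ≤ μ ({x | ¬ f x = hf.mk f x} ∩ s) := measure_mono hsub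
      _ ≤ (μ.restrict s) {x | ¬ f x = hf.mk f x} := Measure.le_restrict_apply s _
      _ = 0 := h0
  filter_upwards [key, hae] with x h1 h2
  rwa [h2]

lemma aux_rpow_add_le {a b β : ℝ} (ha : 0 ≤ a) (hb : 0 ≤ b) (hβ : 0 ≤ β) :
    (a + b) ^ β ≤ 2 ^ β * (a ^ β + b ^ β) := by
  have hm : a + b ≤ 2 * max a b := by
    rcases max_cases a b with ⟨he, _⟩ | ⟨he, _⟩ <;> rw [he] <;>
      linarith [le_max_left a b, le_max_right a b]
  calc (a + b) ^ β ≤ (2 * max a b) ^ β :=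
        Real.rpow_le_rpow (by linarith) hm hβ
    _ = 2 ^ β * (max a b) ^ β := Real.mul_rpow (by norm_num) (le_max_of_le_left ha)
    _ ≤ 2 ^ β * (a ^ β + b ^ β) := by
        gcongr
        rcases max_cases a b with ⟨he, _⟩ | ⟨he, _⟩ <;> rw [he] <;>
          [nlinarith [Real.rpow_nonneg hb β]; nlinarith [Real.rpow_nonneg ha β]]

set_option maxHeartbeats 1600000 in
lemma aux_main {E : Type*} [NormedAddCommGroup E] [NormedSpace ℝ E] [MeasurableSpace E]
    [OpensMeasurableSpace E] [ProperSpace E] [Nontrivial E]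
    (ν : Measure E) (hν0 : ∀ z : E, ν {z} = 0)
    (β Q lam c : ℝ) (hβ : 0 < β) (hQ : 0 < Q) (hc0 : 0 < c) (hc1 : c < 1)
    (φ H : E → ℝ)
    (hφm : AEStronglyMeasurable φ ν)
    (hφ01 : ∀ᵐ y ∂ν, 0 ≤ φ y ∧ φ y ≤ 1)
    (hA : Integrable (fun y => φ y * (1 + ‖y‖ ^ β)) ν)
    (ha : 0 < ∫ y, φ y ∂ν)
    (hker : ∀ z : E, ∀ᵐ y ∂ν, 1 - c ≤ 1 + lam * ‖z - y‖ ∧ 1 + lam * ‖z - y‖ ≤ 1)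
    (heq : ∀ z : E, Q * H z = ∫ y, ‖z - y‖ ^ β * φ y * (1 + lam * ‖z - y‖) ∂ν) :
    ((1 - c) * (∫ y, φ y ∂ν) / Q ≤
        liminf (fun z : E => H z / ‖z‖ ^ β) (cobounded E) ∧
      liminf (fun z : E => H z / ‖z‖ ^ β) (cobounded E) ≤
        limsup (fun z : E => H z / ‖z‖ ^ β) (cobounded E) ∧
      limsup (fun z : E => H z / ‖z‖ ^ β) (cobounded E) ≤ (∫ y, φ y ∂ν) / Q) ∧
    ∃ C₁ > (0 : ℝ), ∃ C₂ > (0 : ℝ), ∀ z : E,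
      C₁ * (1 + ‖z‖ ^ β) ≤ H z ∧ H z ≤ C₂ * (1 + ‖z‖ ^ β) := by
  haveI hcg : (cobounded E).IsCountablyGenerated := by
    rw [← comap_norm_atTop]; infer_instance
  haveI hnb : (cobounded E).NeBot := by infer_instance
  set w : E → ℝ := fun y => ‖y‖ ^ β with hwdef
  have hwnn : ∀ y, 0 ≤ w y := fun y => Real.rpow_nonneg (norm_nonneg _) _
  have hwcont : Continuous w := continuous_norm.rpow_const (fun y => Or.inr hβ.le)
  have hIntφ : Integrable φ ν := by
    refine hA.mono' hφm ?_
    filter_upwards [hφ01] with y ⟨h0, h1⟩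
    rw [Real.norm_eq_abs, abs_of_nonneg h0]
    nlinarith [hwnn y]
  have hIntφw : Integrable (fun y => φ y * w y) ν := by
    refine hA.mono' (hφm.mul hwcont.aestronglyMeasurable) ?_
    filter_upwards [hφ01] with y ⟨h0, h1⟩
    rw [Real.norm_eq_abs, abs_of_nonneg (mul_nonneg h0 (hwnn y))]
    nlinarith [hwnn y]
  set a' : ℝ := ∫ y, φ y ∂ν with ha'def
  set A₂ : ℝ := ∫ y, φ y * w y ∂ν with hA₂def
  have hA₂nn : 0 ≤ A₂ := by
    refine integral_nonneg_of_ae ?_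
    filter_upwards [hφ01] with y ⟨h0, _⟩
    exact mul_nonneg h0 (hwnn y)
  set K : E → E → ℝ := fun z y => ‖z - y‖ ^ β with hKdef
  have hKnn : ∀ z y, 0 ≤ K z y := fun z y => Real.rpow_nonneg (norm_nonneg _) _
  have hKcont : ∀ z, Continuous (fun y => K z y) :=
    fun z => ((continuous_const.sub continuous_id).norm).rpow_const (fun y => Or.inr hβ.le)
  have h2β : (0:ℝ) < 2 ^ β := Real.rpow_pos_of_pos two_pos β
  have hKb : ∀ z y, K z y ≤ 2 ^ β * (‖z‖ ^ β + w y) := by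
    intro z y
    calc K z y ≤ (‖z‖ + ‖y‖) ^ β :=
          Real.rpow_le_rpow (norm_nonneg _) (norm_sub_le z y) hβ.le
      _ ≤ 2 ^ β * (‖z‖ ^ β + ‖y‖ ^ β) := aux_rpow_add_le (norm_nonneg _) (norm_nonneg _) hβ.le
  have hIntbound : ∀ t : ℝ, Integrable (fun y => 2 ^ β * t * φ y + 2 ^ β * (φ y * w y)) ν :=
    fun t => (hIntφ.const_mul _).add (hIntφw.const_mul _)
  have hIntKφ : ∀ z, Integrable (fun y => K z y * φ y) ν := by
    intro z
    refine (hIntbound (‖z‖ ^ β)).mono' ((hKcont z).aestronglyMeasurable.mul hφm) ?_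
    filter_upwards [hφ01] with y ⟨h0, h1⟩
    rw [Real.norm_eq_abs, abs_of_nonneg (mul_nonneg (hKnn z y) h0)]
    nlinarith [hKb z y, hKnn z y, hwnn y, Real.rpow_nonneg (norm_nonneg z) β, h2β]
  have hIntI : ∀ z, Integrable (fun y => K z y * φ y * (1 + lam * ‖z - y‖)) ν := by
    intro z
    have hm : Continuous (fun y : E => 1 + lam * ‖z - y‖) :=
      continuous_const.add (continuous_const.mul ((continuous_const.sub continuous_id).norm))
    refine (hIntbound (‖z‖ ^ β)).mono'
      (((hKcont z).aestronglyMeasurable.mul hφm).mul hm.aestronglyMeasurable) ?_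
    filter_upwards [hφ01, hker z] with y ⟨h0, h1⟩ ⟨hk1, hk2⟩
    rw [Real.norm_eq_abs, abs_mul, abs_of_nonneg (mul_nonneg (hKnn z y) h0)]
    have habs : |1 + lam * ‖z - y‖| ≤ 1 := abs_le.2 ⟨by linarith, hk2⟩
    nlinarith [hKb z y, hKnn z y, hwnn y, Real.rpow_nonneg (norm_nonneg z) β, h2β,
      mul_nonneg (hKnn z y) h0]
  set G₀ : E → ℝ := fun z => ∫ y, K z y * φ y ∂ν with hG₀def
  have hsand : ∀ z, (1 - c) * G₀ z ≤ Q * H z ∧ Q * H z ≤ G₀ z := by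
    intro z
    have hEq : Q * H z = ∫ y, K z y * φ y * (1 + lam * ‖z - y‖) ∂ν := heq z
    constructor
    · rw [hEq]
      rw [show (1 - c) * G₀ z = ∫ y, (1 - c) * (K z y * φ y) ∂ν from
        (integral_const_mul _ _).symm]
      refine integral_mono_ae ((hIntKφ z).const_mul _) (hIntI z) ?_
      filter_upwards [hφ01, hker z] with y ⟨h0, h1⟩ ⟨hk1, hk2⟩
      have := mul_nonneg (hKnn z y) h0
      nlinarith
    · rw [hEq]
      refine integral_mono_ae (hIntI z) (hIntKφ z) ?_
      filter_upwards [hφ01, hker z] with y ⟨h0, h1⟩ ⟨hk1, hk2⟩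
      have := mul_nonneg (hKnn z y) h0
      nlinarith
  have hG₀ub : ∀ z, G₀ z ≤ 2 ^ β * (a' + A₂) * (1 + ‖z‖ ^ β) := by
    intro z
    have h1 : G₀ z ≤ ∫ y, (2 ^ β * ‖z‖ ^ β * φ y + 2 ^ β * (φ y * w y)) ∂ν := by
      refine integral_mono_ae (hIntKφ z) (hIntbound (‖z‖ ^ β)) ?_
      filter_upwards [hφ01] with y ⟨h0, h1⟩
      nlinarith [hKb z y, hKnn z y, hwnn y, Real.rpow_nonneg (norm_nonneg z) β, h2β]
    have h2 : ∫ y, (2 ^ β * ‖z‖ ^ β * φ y + 2 ^ β * (φ y * w y)) ∂ν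
        = 2 ^ β * ‖z‖ ^ β * a' + 2 ^ β * A₂ := by
      rw [integral_add (hIntφ.const_mul _) (hIntφw.const_mul _), integral_const_mul,
        integral_const_mul]
    have h3 : 2 ^ β * ‖z‖ ^ β * a' + 2 ^ β * A₂ ≤ 2 ^ β * (a' + A₂) * (1 + ‖z‖ ^ β) := by
      nlinarith [mul_pos h2β ha,
        mul_nonneg (mul_nonneg h2β.le hA₂nn) (Real.rpow_nonneg (norm_nonneg z) β)]
    rw [h2] at h1
    linarith
  have hnorm_top : Tendsto (fun z : E => ‖z‖) (cobounded E) atTop := tendsto_norm_cobounded_atTop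
  have hev1 : ∀ᶠ z : E in cobounded E, 1 ≤ ‖z‖ := hnorm_top.eventually (eventually_ge_atTop 1)
  have hGlim : Tendsto (fun z : E => G₀ z / ‖z‖ ^ β) (cobounded E) (𝓝 a') := by
    have key : Tendsto (fun z : E => ∫ y, (K z y * φ y) / ‖z‖ ^ β ∂ν) (cobounded E) (𝓝 a') := by
      refine tendsto_integral_filter_of_dominated_convergence
        (fun y => 2 ^ β * 1 * φ y + 2 ^ β * (φ y * w y)) ?_ ?_ (hIntbound 1) ?_
      · exact Eventually.of_forall fun z =>
          (((hKcont z).aestronglyMeasurable.mul hφm).mul aestronglyMeasurable_const).congr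
            (Eventually.of_forall fun y => (div_eq_mul_inv _ _).symm)
      · filter_upwards [hev1] with z hz
        filter_upwards [hφ01] with y ⟨h0, h1⟩
        have hz0 : (0:ℝ) < ‖z‖ := by linarith
        have htβ : (0:ℝ) < ‖z‖ ^ β := Real.rpow_pos_of_pos hz0 β
        have hzβ : (1:ℝ) ≤ ‖z‖ ^ β := by
          calc (1:ℝ) = 1 ^ β := (Real.one_rpow β).symm
            _ ≤ ‖z‖ ^ β := Real.rpow_le_rpow zero_le_one hz hβ.le
        have hd : K z y ≤ 2 ^ β * (1 + w y) * ‖z‖ ^ β := by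
          calc K z y ≤ (‖z‖ + ‖y‖) ^ β :=
                Real.rpow_le_rpow (norm_nonneg _) (norm_sub_le z y) hβ.le
            _ ≤ (‖z‖ * (1 + ‖y‖)) ^ β := by
                refine Real.rpow_le_rpow (by positivity) ?_ hβ.le
                nlinarith [norm_nonneg y]
            _ = ‖z‖ ^ β * (1 + ‖y‖) ^ β :=
                Real.mul_rpow (norm_nonneg _) (by positivity)
            _ ≤ ‖z‖ ^ β * (2 ^ β * (1 + w y)) := by
                have haux := aux_rpow_add_le (zero_le_one) (norm_nonneg y) hβ.le
                rw [Real.one_rpow] at haux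
                nlinarith
            _ = 2 ^ β * (1 + w y) * ‖z‖ ^ β := by ring
        rw [Real.norm_eq_abs, abs_div, abs_of_nonneg (mul_nonneg (hKnn z y) h0),
          abs_of_pos htβ, div_le_iff₀ htβ]
        nlinarith [hwnn y, mul_nonneg (mul_nonneg h2β.le (by nlinarith [hwnn y] :
          (0:ℝ) ≤ 1 + w y)) (sub_nonneg.2 hzβ)]
      · refine ae_of_all _ fun y => ?_
        have hratio : Tendsto (fun z : E => ‖z - y‖ / ‖z‖) (cobounded E) (𝓝 1) := by
          have h0 : Tendsto (fun z : E => ‖z - y‖ / ‖z‖ - 1) (cobounded E) (𝓝 0) := by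
            apply squeeze_zero_norm' (a := fun z : E => ‖y‖ / ‖z‖)
            · filter_upwards [hev1] with z hz
              have hz0 : (0:ℝ) < ‖z‖ := by linarith
              have he : ‖z - y‖ / ‖z‖ - 1 = (‖z - y‖ - ‖z‖) / ‖z‖ := by field_simp
              rw [Real.norm_eq_abs, he, abs_div, abs_of_pos hz0]
              gcongr
              calc |‖z - y‖ - ‖z‖| ≤ ‖(z - y) - z‖ := abs_norm_sub_norm_le _ _
                _ = ‖y‖ := by rw [sub_sub_cancel_left, norm_neg]
            · exact tendsto_const_nhds.div_atTop hnorm_top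
          have h1 := h0.add (tendsto_const_nhds (x := (1:ℝ)))
          simpa using h1
        have hratioβ : Tendsto (fun z : E => (‖z - y‖ / ‖z‖) ^ β) (cobounded E) (𝓝 1) := by
          have hc := (Real.continuousAt_rpow_const 1 β (Or.inl one_ne_zero)).tendsto
          have := hc.comp hratio
          simpa [Real.one_rpow, Function.comp_def] using this
        have hmul := hratioβ.mul_const (φ y)
        rw [one_mul] at hmul
        refine Tendsto.congr' ?_ hmul
        filter_upwards [hev1] with z hz
        have hz0 : (0:ℝ) < ‖z‖ := by linarith
        rw [Real.div_rpow (norm_nonneg _) (norm_nonneg _)]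
        ring
    refine key.congr fun z => ?_
    rw [← integral_div]
  have hG₀pos : ∀ z, 0 < G₀ z := by
    have hφnn : 0 ≤ᶠ[ae ν] φ := hφ01.mono fun y hy => hy.1
    have hsupp : 0 < ν (Function.support φ) :=
      (integral_pos_iff_support_of_nonneg_ae hφnn hIntφ).mp ha
    intro z
    refine (integral_pos_iff_support_of_nonneg_ae ?_ (hIntKφ z)).mpr ?_
    · filter_upwards [hφ01] with y ⟨h0, _⟩
      exact mul_nonneg (hKnn z y) h0
    · have hsub : Function.support φ \ {z} ⊆ Function.support (fun y => K z y * φ y) := by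
        rintro y ⟨hy, hyz⟩
        simp only [Function.mem_support] at hy ⊢
        have hz : z - y ≠ 0 := by
          intro hzy
          exact hyz (by simp [(sub_eq_zero.mp hzy).symm])
        have : (0:ℝ) < ‖z - y‖ := norm_pos_iff.mpr hz
        exact mul_ne_zero (ne_of_gt (Real.rpow_pos_of_pos this β)) hy
      calc 0 < ν (Function.support φ \ {z}) := by
            rw [measure_diff_null (hν0 z)]; exact hsupp
        _ ≤ ν (Function.support (fun y => K z y * φ y)) := measure_mono hsub
  have hG₀cont : Continuous G₀ := by
    rw [continuous_iff_continuousAt]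
    intro z₀
    refine continuousAt_of_dominated
      (bound := fun y => 2 ^ β * ((‖z₀‖ + 1) ^ β) * φ y + 2 ^ β * (φ y * w y))
      (Eventually.of_forall fun z => (hKcont z).aestronglyMeasurable.mul hφm) ?_
      (hIntbound ((‖z₀‖ + 1) ^ β)) ?_
    · filter_upwards [Metric.ball_mem_nhds z₀ one_pos] with z hz
      filter_upwards [hφ01] with y ⟨h0, h1⟩
      have hzz : ‖z - z₀‖ < 1 := by rwa [Metric.mem_ball, dist_eq_norm] at hz
      have hK' : K z y ≤ 2 ^ β * ((‖z₀‖ + 1) ^ β + w y) := by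
        calc K z y ≤ (‖z₀‖ + 1 + ‖y‖) ^ β := by
              refine Real.rpow_le_rpow (norm_nonneg _) ?_ hβ.le
              calc ‖z - y‖ = ‖(z - z₀) + (z₀ - y)‖ := by abel_nf
                _ ≤ ‖z - z₀‖ + ‖z₀ - y‖ := norm_add_le _ _
                _ ≤ 1 + (‖z₀‖ + ‖y‖) := by
                    have := norm_sub_le z₀ y
                    linarith
                _ = ‖z₀‖ + 1 + ‖y‖ := by ring
          _ ≤ 2 ^ β * ((‖z₀‖ + 1) ^ β + ‖y‖ ^ β) :=
              aux_rpow_add_le (by positivity) (norm_nonneg _) hβ.le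
      rw [Real.norm_eq_abs, abs_of_nonneg (mul_nonneg (hKnn z y) h0)]
      calc K z y * φ y ≤ (2 ^ β * ((‖z₀‖ + 1) ^ β + w y)) * φ y :=
            mul_le_mul_of_nonneg_right hK' h0
        _ = 2 ^ β * ((‖z₀‖ + 1) ^ β) * φ y + 2 ^ β * (φ y * w y) := by ring
    · refine ae_of_all _ fun y => ?_
      exact (((continuous_id.sub continuous_const).norm.rpow_const
        (fun _ => Or.inr hβ.le)).mul continuous_const).continuousAt
  have hG₀lb : ∃ C > (0:ℝ), ∀ z, C * (1 + ‖z‖ ^ β) ≤ G₀ z := by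
    have hev : ∀ᶠ z : E in cobounded E, a' / 2 < G₀ z / ‖z‖ ^ β ∧ 1 ≤ ‖z‖ :=
      (hGlim.eventually (lt_mem_nhds (by linarith : a' / 2 < a'))).and hev1
    obtain ⟨R, -, hR⟩ := Filter.hasBasis_cobounded_norm.eventually_iff.mp hev
    set R' : ℝ := max R 1 with hR'def
    have hR'1 : (1:ℝ) ≤ R' := le_max_right _ _
    obtain ⟨zm, hzm, hmin⟩ := (isCompact_closedBall (0:E) R').exists_isMinOn
      ⟨0, by simp [Metric.mem_closedBall]; linarith⟩ hG₀cont.continuousOn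
    have hm : 0 < G₀ zm := hG₀pos zm
    have hplus : ∀ z : E, (0:ℝ) < 1 + ‖z‖ ^ β := by
      intro z
      have := Real.rpow_nonneg (norm_nonneg z) β
      linarith
    refine ⟨min (a' / 4) (G₀ zm / (1 + R' ^ β)), ?_, ?_⟩
    · have hpos : (0:ℝ) < 1 + R' ^ β := by
        have := Real.rpow_nonneg (by linarith : (0:ℝ) ≤ R') β
        linarith
      exact lt_min (by linarith) (div_pos hm hpos)
    · intro z
      by_cases hcase : ‖z‖ ≤ R'
      · have hz' : z ∈ Metric.closedBall (0:E) R' := by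
          rwa [Metric.mem_closedBall, dist_zero_right]
        have h1 : G₀ zm ≤ G₀ z := hmin hz'
        have h2 : ‖z‖ ^ β ≤ R' ^ β :=
          Real.rpow_le_rpow (norm_nonneg _) hcase hβ.le
        have hpos : (0:ℝ) < 1 + R' ^ β := by
          have := Real.rpow_nonneg (by linarith : (0:ℝ) ≤ R') β
          linarith
        calc min (a' / 4) (G₀ zm / (1 + R' ^ β)) * (1 + ‖z‖ ^ β)
            ≤ (G₀ zm / (1 + R' ^ β)) * (1 + R' ^ β) := by
              refine mul_le_mul (min_le_right _ _) (by linarith) (hplus z).le ?_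
              exact (div_pos hm hpos).le
          _ = G₀ zm := by field_simp
          _ ≤ G₀ z := h1
      · push_neg at hcase
        have hPz := hR (show z ∈ {x : E | R ≤ ‖x‖} from le_trans (le_max_left R 1) hcase.le)
        obtain ⟨hq, hz1⟩ := hPz
        have hz0 : (0:ℝ) < ‖z‖ := by linarith
        have htβ : (0:ℝ) < ‖z‖ ^ β := Real.rpow_pos_of_pos hz0 β
        have hzβ1 : (1:ℝ) ≤ ‖z‖ ^ β := by
          calc (1:ℝ) = 1 ^ β := (Real.one_rpow β).symm
            _ ≤ ‖z‖ ^ β := Real.rpow_le_rpow zero_le_one hz1 hβ.le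
        have h1 : a' / 2 * ‖z‖ ^ β ≤ G₀ z := by
          rw [← le_div_iff₀ htβ]
          exact hq.le
        calc min (a' / 4) (G₀ zm / (1 + R' ^ β)) * (1 + ‖z‖ ^ β)
            ≤ a' / 4 * (1 + ‖z‖ ^ β) := by
              refine mul_le_mul_of_nonneg_right (min_le_left _ _) (hplus z).le
          _ ≤ a' / 2 * ‖z‖ ^ β := by nlinarith
          _ ≤ G₀ z := h1
  -- assemble conclusions
  constructor
  · -- liminf/limsup part
    set f : E → ℝ := fun z => H z / ‖z‖ ^ β with hfdef
    have hfev : ∀ᶠ z in cobounded E,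
        (1 - c) / Q * (G₀ z / ‖z‖ ^ β) ≤ f z ∧ f z ≤ (G₀ z / ‖z‖ ^ β) / Q := by
      filter_upwards [hev1] with z hz
      have hz0 : (0:ℝ) < ‖z‖ := by linarith
      have htβ : (0:ℝ) < ‖z‖ ^ β := Real.rpow_pos_of_pos hz0 β
      obtain ⟨hs1, hs2⟩ := hsand z
      have e1 : (1 - c) / Q * (G₀ z / ‖z‖ ^ β) = ((1 - c) * G₀ z) / (Q * ‖z‖ ^ β) :=
        div_mul_div_comm (1 - c) Q (G₀ z) (‖z‖ ^ β)
      have e2 : (G₀ z / ‖z‖ ^ β) / Q = G₀ z / (Q * ‖z‖ ^ β) := by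
        rw [div_div, mul_comm]
      simp only [hfdef]
      constructor
      · rw [e1, div_le_div_iff₀ (by positivity) htβ]
        nlinarith
      · rw [e2, div_le_div_iff₀ htβ (by positivity)]
        nlinarith
    have hg1lim : Tendsto (fun z : E => (1 - c) / Q * (G₀ z / ‖z‖ ^ β)) (cobounded E)
        (𝓝 ((1 - c) / Q * a')) := hGlim.const_mul _
    have hg2lim : Tendsto (fun z : E => (G₀ z / ‖z‖ ^ β) / Q) (cobounded E)
        (𝓝 (a' / Q)) := hGlim.div_const _
    have hub : IsBoundedUnder (· ≤ ·) (cobounded E) f := by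
      refine isBoundedUnder_of_eventually_le (a := a' / Q + 1) ?_
      filter_upwards [hfev, hg2lim.eventually (gt_mem_nhds (by linarith : a' / Q < a' / Q + 1))]
        with z hz hz2
      linarith [hz.2]
    have hlb : IsBoundedUnder (· ≥ ·) (cobounded E) f := by
      refine isBoundedUnder_of_eventually_ge (a := (1 - c) / Q * a' - 1) ?_
      filter_upwards [hfev,
        hg1lim.eventually (lt_mem_nhds (by linarith : (1 - c) / Q * a' - 1 < (1 - c) / Q * a'))]
        with z hz hz2
      linarith [hz.1]
    refine ⟨?_, liminf_le_limsup hub hlb, ?_⟩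
    · have h1 : liminf (fun z : E => (1 - c) / Q * (G₀ z / ‖z‖ ^ β)) (cobounded E)
          = (1 - c) / Q * a' := hg1lim.liminf_eq
      have h2 : liminf (fun z : E => (1 - c) / Q * (G₀ z / ‖z‖ ^ β)) (cobounded E)
          ≤ liminf f (cobounded E) :=
        liminf_le_liminf (hfev.mono fun z hz => hz.1) hg1lim.isBoundedUnder_ge
          hub.isCoboundedUnder_ge
      calc (1 - c) * a' / Q = (1 - c) / Q * a' := by ring
        _ ≤ liminf f (cobounded E) := h1 ▸ h2
    · have h1 : limsup (fun z : E => (G₀ z / ‖z‖ ^ β) / Q) (cobounded E) = a' / Q :=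
        hg2lim.limsup_eq
      have h2 : limsup f (cobounded E)
          ≤ limsup (fun z : E => (G₀ z / ‖z‖ ^ β) / Q) (cobounded E) :=
        limsup_le_limsup (hfev.mono fun z hz => hz.2) hlb.isCoboundedUnder_le
          hg2lim.isBoundedUnder_le
      exact h1 ▸ h2
  · -- pointwise two-sided bounds
    obtain ⟨C, hCpos, hC⟩ := hG₀lb
    refine ⟨(1 - c) * C / Q, div_pos (mul_pos (by linarith) hCpos) hQ,
      2 ^ β * (a' + A₂) / Q, div_pos (mul_pos h2β (by linarith)) hQ, fun z => ?_⟩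
    constructor
    · obtain ⟨hs1, _⟩ := hsand z
      have h1 : (1 - c) * (C * (1 + ‖z‖ ^ β)) ≤ (1 - c) * G₀ z := by
        nlinarith [hC z]
      rw [div_mul_eq_mul_div, div_le_iff₀ hQ]
      nlinarith
    · obtain ⟨_, hs2⟩ := hsand z
      have h1 : G₀ z ≤ 2 ^ β * (a' + A₂) * (1 + ‖z‖ ^ β) := hG₀ub z
      rw [div_mul_eq_mul_div, le_div_iff₀ hQ]
      nlinarith

/-- Asymptotics at infinity of solutions to the rescaled equation: `h(z) ≍ |z|^{α−n}` as
`|z| → ∞`, with explicit liminf/limsup bounds, and two-sided comparability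
`C₁(1+|z|^{α−n}) ≤ h(z) ≤ C₂(1+|z|^{α−n})`. -/
theorem stmt_18 (n : ℕ) (hn : 0 < n) (α p Q lam c : ℝ) (hα : (n : ℝ) < α)
    (hp : p < 0) (hQ : 0 < Q) (hc0 : 0 < c) (hc1 : c < 1)
    (Ωμ : Set (EuclideanSpace ℝ (Fin n)))
    (h : EuclideanSpace ℝ (Fin n) → ℝ)
    (hge1 : ∀ y ∈ Ωμ, 1 ≤ h y)
    (hA : IntegrableOn (fun y => h y ^ (p - 1) * (1 + ‖y‖ ^ (α - (n : ℝ)))) Ωμ)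
    (ha : 0 < ∫ y in Ωμ, h y ^ (p - 1))
    (hker : ∀ z : EuclideanSpace ℝ (Fin n), ∀ y ∈ Ωμ,
      1 - c ≤ 1 + lam * ‖z - y‖ ∧ 1 + lam * ‖z - y‖ ≤ 1)
    (heq : ∀ z : EuclideanSpace ℝ (Fin n), Q * h z =
      ∫ y in Ωμ, ‖z - y‖ ^ (α - (n : ℝ)) * h y ^ (p - 1) * (1 + lam * ‖z - y‖)) :
    ((1 - c) * (∫ y in Ωμ, h y ^ (p - 1)) / Q ≤
        liminf (fun z : EuclideanSpace ℝ (Fin n) => h z / ‖z‖ ^ (α - (n : ℝ)))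
          (Bornology.cobounded (EuclideanSpace ℝ (Fin n))) ∧
      liminf (fun z : EuclideanSpace ℝ (Fin n) => h z / ‖z‖ ^ (α - (n : ℝ)))
          (Bornology.cobounded (EuclideanSpace ℝ (Fin n))) ≤
        limsup (fun z : EuclideanSpace ℝ (Fin n) => h z / ‖z‖ ^ (α - (n : ℝ)))
          (Bornology.cobounded (EuclideanSpace ℝ (Fin n))) ∧
      limsup (fun z : EuclideanSpace ℝ (Fin n) => h z / ‖z‖ ^ (α - (n : ℝ)))
          (Bornology.cobounded (EuclideanSpace ℝ (Fin n))) ≤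
        (∫ y in Ωμ, h y ^ (p - 1)) / Q) ∧
    ∃ C₁ > (0 : ℝ), ∃ C₂ > (0 : ℝ), ∀ z : EuclideanSpace ℝ (Fin n),
      C₁ * (1 + ‖z‖ ^ (α - (n : ℝ))) ≤ h z ∧ h z ≤ C₂ * (1 + ‖z‖ ^ (α - (n : ℝ))) := by
  haveI : Nonempty (Fin n) := ⟨⟨0, hn⟩⟩
  have hβ : (0:ℝ) < α - n := by linarith
  set ν : Measure (EuclideanSpace ℝ (Fin n)) := volume.restrict Ωμ with hνdef
  have hν0 : ∀ z : EuclideanSpace ℝ (Fin n), ν {z} = 0 := by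
    intro z
    rw [hνdef, Measure.restrict_apply (measurableSet_singleton z)]
    refine le_antisymm ?_ (zero_le)
    calc volume ({z} ∩ Ωμ) ≤ volume {z} := measure_mono Set.inter_subset_left
      _ = 0 := measure_singleton z
  have hφm : AEStronglyMeasurable (fun y => h y ^ (p - 1)) ν := by
    have h1 : AEStronglyMeasurable
        (fun y => h y ^ (p - 1) * (1 + ‖y‖ ^ (α - (n:ℝ)))) ν := hA.aestronglyMeasurable
    have hcont : Continuous (fun y : EuclideanSpace ℝ (Fin n) => 1 + ‖y‖ ^ (α - (n:ℝ))) :=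
      continuous_const.add (continuous_norm.rpow_const (fun y => Or.inr hβ.le))
    have hne : ∀ y : EuclideanSpace ℝ (Fin n), (1 + ‖y‖ ^ (α - (n:ℝ))) ≠ 0 := by
      intro y
      have := Real.rpow_nonneg (norm_nonneg y) (α - (n:ℝ))
      positivity
    have h2 := h1.mul (hcont.inv₀ hne).aestronglyMeasurable
    refine h2.congr (Filter.Eventually.of_forall fun y => ?_)
    have hpos := hne y
    simp only [Pi.mul_apply, Pi.inv_apply]
    field_simp
  have hφ01 : ∀ᵐ y ∂ν, 0 ≤ h y ^ (p - 1) ∧ h y ^ (p - 1) ≤ 1 := by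
    refine aux_ae_restrict_fun hφm (P := fun t => 0 ≤ t ∧ t ≤ 1)
      ((measurableSet_le measurable_const measurable_id).inter
        (measurableSet_le measurable_id measurable_const)) fun y hy => ?_
    have h1 : (1:ℝ) ≤ h y := hge1 y hy
    exact ⟨(Real.rpow_pos_of_pos (by linarith) _).le,
      Real.rpow_le_one_of_one_le_of_nonpos h1 (by linarith)⟩
  have hker' : ∀ z : EuclideanSpace ℝ (Fin n), ∀ᵐ y ∂ν,
      1 - c ≤ 1 + lam * ‖z - y‖ ∧ 1 + lam * ‖z - y‖ ≤ 1 := by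
    intro z
    refine aux_ae_restrict_of_forall ?_ (hker z)
    have hm : Measurable (fun y : EuclideanSpace ℝ (Fin n) => 1 + lam * ‖z - y‖) :=
      (((measurable_const.sub measurable_id).norm).const_mul lam).const_add 1
    exact (measurableSet_le measurable_const hm).inter (measurableSet_le hm measurable_const)
  exact aux_main ν hν0 (α - n) Q lam c hβ hQ hc0 hc1 (fun y => h y ^ (p - 1)) h
    hφm hφ01 hA ha hker' heq
end
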